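/- The vector fields E₋₁ = λ_ε ∂_λ + λ_εε ∂_{λ_ε} + ((3/2)λ_εε²/λ_ε − R(λ)λ_ε³)∂_{λ_εε}, E₀ = λ_ε ∂_{λ_ε} + 2λ_εε ∂_{λ_εε}, and E₁ = 2λ_ε ∂_{λ_εε} span a Lie algebra isomorphic to sl₂: [E₀, E₋₁] = −E₋₁ (up to sign conventions), [E₀, E₁] = E₁, [E₋₁, E₁] = 2E₀ (or the standard sl₂ relations after normalization). -/

import Mathlib

/-!
`E₀` is the Euler field of the weights `(0, 1, 2)` on `(λ, λ_ε, λ_εε)`, and `E₋₁`, `E₁` are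
homogeneous of weights `1` and `-1` for it; this gives the first two brackets. In `[E₋₁, E₁]`
only `∂_{λ_εε} E₋₁` enters, and the `R`-term of `E₋₁` does not involve `λ_εε`, so `R` drops out.
-/

/-- `E₋₁ = λ_ε ∂_λ + λ_εε ∂_{λ_ε} + ((3/2)λ_εε²/λ_ε − R(λ)λ_ε³)∂_{λ_εε}`. -/
noncomputable def Em1 (R : ℂ → ℂ) (p : ℂ × ℂ × ℂ) : ℂ × ℂ × ℂ :=
  (p.2.1, p.2.2, (3 / 2) * p.2.2 ^ 2 / p.2.1 - R p.1 * p.2.1 ^ 3)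

/-- `E₀ = λ_ε ∂_{λ_ε} + 2λ_εε ∂_{λ_εε}`. -/
def E0 (p : ℂ × ℂ × ℂ) : ℂ × ℂ × ℂ := (0, p.2.1, 2 * p.2.2)

/-- `E₁ = 2λ_ε ∂_{λ_εε}`. -/
def E1 (p : ℂ × ℂ × ℂ) : ℂ × ℂ × ℂ := (0, 0, 2 * p.2.1)

theorem IsLinearMap.fderiv_apply {𝕜 E F : Type*} [NontriviallyNormedField 𝕜] [CompleteSpace 𝕜]
    [NormedAddCommGroup E] [NormedSpace 𝕜 E] [FiniteDimensional 𝕜 E]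
    [NormedAddCommGroup F] [NormedSpace 𝕜 F] {f : E → F} (hf : IsLinearMap 𝕜 f) (x v : E) :
    fderiv 𝕜 f x v = f v :=
  DFunLike.congr_fun ((LinearMap.toContinuousLinearMap (hf.mk' f)).fderiv (x := x)) v

lemma isLinearMap_E0 : IsLinearMap ℂ E0 :=
  ⟨fun p q => by simp [E0, mul_add], fun c p => by simp [E0]; ring⟩

lemma isLinearMap_E1 : IsLinearMap ℂ E1 :=
  ⟨fun p q => by simp [E1, mul_add], fun c p => by simp [E1]; ring⟩

lemma fderiv_Em1_apply {R : ℂ → ℂ} {p : ℂ × ℂ × ℂ} (hR : DifferentiableAt ℂ R p.1)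
    (hp : p.2.1 ≠ 0) (v : ℂ × ℂ × ℂ) :
    fderiv ℂ (Em1 R) p v = (v.2.1, v.2.2,
      3 * p.2.2 / p.2.1 * v.2.2 - 3 / 2 * p.2.2 ^ 2 / p.2.1 ^ 2 * v.2.1
        - deriv R p.1 * p.2.1 ^ 3 * v.1 - 3 * R p.1 * p.2.1 ^ 2 * v.2.1) := by
  have hy : HasFDerivAt (fun q : ℂ × ℂ × ℂ => q.2.1) _ p :=
    (hasFDerivAt_snd (𝕜 := ℂ) (p := p)).fst
  have hz : HasFDerivAt (fun q : ℂ × ℂ × ℂ => q.2.2) _ p :=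
    (hasFDerivAt_snd (𝕜 := ℂ) (p := p)).snd
  have hlast := (((hz.pow 2).const_mul (3 / 2)).mul ((hasDerivAt_inv hp).comp_hasFDerivAt p hy)).sub
    ((hR.hasDerivAt.comp_hasFDerivAt p hasFDerivAt_fst).mul (hy.pow 3))
  have hEm1 : HasFDerivAt (Em1 R) _ p := hy.prodMk (hz.prodMk hlast)
  rw [hEm1.fderiv]
  simp only [Function.comp_apply, Nat.add_one_sub_one, pow_one, nsmul_eq_mul, Nat.cast_ofNat,
    ContinuousLinearMap.prod_apply, ContinuousLinearMap.comp_apply, ContinuousLinearMap.coe_snd',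
    ContinuousLinearMap.coe_fst', sub_apply, add_apply, smul_apply,
    smul_eq_mul, Prod.mk.injEq, true_and]
  ring

section Brackets

open VectorField

variable {R : ℂ → ℂ} {p : ℂ × ℂ × ℂ}

lemma lieBracket_E0_Em1 (hR : DifferentiableAt ℂ R p.1) (hp : p.2.1 ≠ 0) :
    lieBracket ℂ E0 (Em1 R) p = Em1 R p := by
  rw [lieBracket, fderiv_Em1_apply hR hp, isLinearMap_E0.fderiv_apply]
  ext <;> simp [E0, Em1] <;> field_simp <;> ring

lemma lieBracket_E0_E1 : lieBracket ℂ E0 E1 p = -E1 p := by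
  rw [lieBracket, isLinearMap_E0.fderiv_apply, isLinearMap_E1.fderiv_apply]
  ext <;> simp [E0, E1]; ring

lemma lieBracket_Em1_E1 (hR : DifferentiableAt ℂ R p.1) (hp : p.2.1 ≠ 0) :
    lieBracket ℂ (Em1 R) E1 p = (-2 : ℂ) • E0 p := by
  rw [lieBracket, fderiv_Em1_apply hR hp, isLinearMap_E1.fderiv_apply]
  ext <;> simp [E0, E1, Em1]
  field_simp
  ring

end Brackets

/-- On `{λ_ε ≠ 0}`, the fields `E₋₁, E₀, E₁` close under the Lie bracket with
structure constants (independent of `R`) realizing the standard `sl₂` relations: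
`[E₀, E₋₁] = E₋₁`, `[E₀, E₁] = −E₁`, `[E₋₁, E₁] = −2E₀` (up to sign conventions). -/
theorem sl2_parallelism_brackets (R : ℂ → ℂ) (hR : Differentiable ℂ R) :
    ∀ p : ℂ × ℂ × ℂ, p.2.1 ≠ 0 →
      VectorField.lieBracket ℂ E0 (Em1 R) p = Em1 R p ∧
      VectorField.lieBracket ℂ E0 E1 p = - E1 p ∧
      VectorField.lieBracket ℂ (Em1 R) E1 p = (-2 : ℂ) • E0 p :=
  fun p hp => ⟨lieBracket_E0_Em1 (hR p.1) hp, lieBracket_E0_E1, lieBracket_Em1_E1 (hR p.1) hp⟩
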